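/- arXiv:2112.01467 — 5 statements merged into one kernel-verified Lean document; each statement's English description precedes it below -/
import Mathlib

section
/- Let d ∈ Z and h ∈ Z_{≥0}. There exists a polynomial f(x) ∈ Q(q)[x] such that for all integers m, f([m]_q) = [m+d choose h]_q, and f([n]_q) ∈ Z[q,q^{-1}] for all integers n. (That is, the shifted Gaussian binomial coefficient [m+d choose h]_q is the evaluation at [m]_q of a quantum integer-valued polynomial.) -/
open Polynomial Finset

noncomputable section

/-- The q-integer `[n]_q = (q^n - 1)/(q - 1)` for `n ∈ ℤ`, in the field of
rational functions `ℚ(q)`. -/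
def qInt (n : ℤ) : RatFunc ℚ := (RatFunc.X ^ n - 1) / (RatFunc.X - 1)

/-- An element of `ℚ(q)` lies in `ℤ[q, q⁻¹]` if it becomes an integer polynomial
after multiplying by a sufficiently large power of `q`. -/
def IsLaurentInt (z : RatFunc ℚ) : Prop :=
  ∃ (p : Polynomial ℤ) (k : ℕ),
    RatFunc.X ^ k * z = algebraMap (Polynomial ℚ) (RatFunc ℚ) (p.map (Int.castRingHom ℚ))

/-- The polynomial `gbinom(x, k) = x(x-[1]_q)⋯(x-[k-1]_q) / (q^{C(k,2)} [k]_q!)`,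
whose value at `x = [n]_q` is the Gaussian binomial coefficient `[n choose k]_q`. -/
def gbinomPoly (k : ℕ) : Polynomial (RatFunc ℚ) :=
  Polynomial.C ((RatFunc.X ^ (k.choose 2) * ∏ i ∈ Finset.range k, qInt ((i : ℤ) + 1))⁻¹) *
    ∏ i ∈ Finset.range k, (Polynomial.X - Polynomial.C (qInt (i : ℤ)))

/-! The substitution `x ↦ q^d x + [d]_q` sends `[m]_q` to `[m+d]_q`, so
`f = gbinom(q^d x + [d]_q)` has the required values, and `f([n]_q)` is the Gaussian binomial
`[n+d choose h]_q`. In the product form `∏_{i<k} (q^{n-i} - 1)/(q^{i+1} - 1)` these satisfy the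
q-Pascal rule `[n+1 choose k+1] = q^{k+1} [n choose k+1] + [n choose k]` for every `n ∈ ℤ`.
Since `q` is a unit of `ℤ[q, q⁻¹]`, the rule can be solved for `[n+1 choose k+1]` as well as
for `[n choose k+1]`, so integrality propagates from `n = 0` in both directions. -/

section GaussBinom

variable {K : Type*} [Field K] (q : K)

def qDescProd (n : ℤ) (k : ℕ) : K := ∏ i ∈ range k, (q ^ (n - i) - 1)

def gaussBinom (n : ℤ) (k : ℕ) : K := qDescProd q n k / ∏ i ∈ range k, (q ^ (i + 1) - 1)

lemma qDescProd_succ (n : ℤ) (k : ℕ) :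
    qDescProd q n (k + 1) = qDescProd q n k * (q ^ (n - k) - 1) :=
  prod_range_succ _ _

lemma qDescProd_succ_succ (n : ℤ) (k : ℕ) :
    qDescProd q (n + 1) (k + 1) = (q ^ (n + 1) - 1) * qDescProd q n k := by
  rw [qDescProd, prod_range_succ', mul_comm]
  congr 1
  · simp
  · refine prod_congr rfl fun i _ => ?_
    push_cast
    ring_nf

@[simp]
lemma gaussBinom_zero_right (n : ℤ) : gaussBinom q n 0 = 1 := by
  simp [gaussBinom, qDescProd]

lemma gaussBinom_zero_succ (k : ℕ) : gaussBinom q 0 (k + 1) = 0 := by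
  rw [gaussBinom, qDescProd, prod_range_succ']
  simp

variable {q}

lemma gaussBinom_succ_succ (hq₀ : q ≠ 0) (hq : ∀ j : ℕ, q ^ (j + 1) ≠ 1)
    (n : ℤ) (k : ℕ) :
    gaussBinom q (n + 1) (k + 1) = q ^ (k + 1) * gaussBinom q n (k + 1) + gaussBinom q n k := by
  have hden : ∏ i ∈ range k, (q ^ (i + 1) - 1) ≠ 0 :=
    prod_ne_zero_iff.2 fun i _ => sub_ne_zero.2 (hq i)
  have hk : q ^ (k + 1) - 1 ≠ 0 := sub_ne_zero.2 (hq k)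
  have hpow : q ^ (k + 1) * q ^ (n - k) = q ^ (n + 1) := by
    rw [← zpow_natCast, ← zpow_add₀ hq₀]
    push_cast
    ring_nf
  rw [gaussBinom, gaussBinom, gaussBinom, qDescProd_succ_succ, qDescProd_succ, prod_range_succ]
  field_simp
  linear_combination -qDescProd q n k * hpow

theorem gaussBinom_mem {S : Subring K} (hq₀ : q ≠ 0) (hq : ∀ j : ℕ, q ^ (j + 1) ≠ 1)
    (hqS : q ∈ S) (hqS' : q⁻¹ ∈ S) (n : ℤ) (k : ℕ) : gaussBinom q n k ∈ S := by
  induction k generalizing n with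
  | zero => simp [S.one_mem]
  | succ k ih =>
    induction n using Int.induction_on with
    | zero => simp [gaussBinom_zero_succ, S.zero_mem]
    | succ n hn =>
      rw [gaussBinom_succ_succ hq₀ hq]
      exact add_mem (mul_mem (pow_mem hqS _) hn) (ih _)
    | pred n hn =>
      have hpascal := gaussBinom_succ_succ hq₀ hq (-n - 1) k
      rw [sub_add_cancel] at hpascal
      have hsolve : gaussBinom q (-n - 1) (k + 1) =
          q⁻¹ ^ (k + 1) * (gaussBinom q (-n) (k + 1) - gaussBinom q (-n - 1) k) := by
        rw [hpascal, inv_pow]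
        field_simp
        ring
      rw [hsolve]
      exact mul_mem (pow_mem hqS' _) (sub_mem hn (ih _))

end GaussBinom

lemma RatFunc.X_pow_succ_ne_one {K : Type*} [Field K] (j : ℕ) :
    (RatFunc.X : RatFunc K) ^ (j + 1) ≠ 1 := by
  intro h
  have := congrArg RatFunc.intDegree h
  rw [← RatFunc.algebraMap_X, ← map_pow, RatFunc.intDegree_polynomial, natDegree_X_pow,
    RatFunc.intDegree_one] at this
  omega

lemma RatFunc.X_sub_one_ne_zero {K : Type*} [Field K] : (RatFunc.X : RatFunc K) - 1 ≠ 0 :=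
  sub_ne_zero.2 (by simpa using RatFunc.X_pow_succ_ne_one (K := K) 0)

def laurentIntSubring : Subring (RatFunc ℚ) where
  carrier := {z | IsLaurentInt z}
  one_mem' := ⟨1, 0, by simp⟩
  zero_mem' := ⟨0, 0, by simp⟩
  mul_mem' := by
    rintro z w ⟨p, k, hp⟩ ⟨r, j, hr⟩
    refine ⟨p * r, k + j, ?_⟩
    rw [Polynomial.map_mul, map_mul, ← hp, ← hr]
    ring
  add_mem' := by
    rintro z w ⟨p, k, hp⟩ ⟨r, j, hr⟩
    refine ⟨Polynomial.X ^ j * p + Polynomial.X ^ k * r, k + j, ?_⟩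
    simp only [Polynomial.map_add, Polynomial.map_mul, Polynomial.map_pow, Polynomial.map_X,
      map_add, map_mul, map_pow, RatFunc.algebraMap_X, ← hp, ← hr]
    ring
  neg_mem' := by
    rintro z ⟨p, k, hp⟩
    refine ⟨-p, k, ?_⟩
    rw [Polynomial.map_neg, map_neg, ← hp, mul_neg]

lemma X_mem_laurentIntSubring : RatFunc.X ∈ laurentIntSubring :=
  ⟨Polynomial.X, 0, by simp⟩

lemma X_inv_mem_laurentIntSubring : RatFunc.X⁻¹ ∈ laurentIntSubring :=
  ⟨1, 1, by simp [RatFunc.X_ne_zero]⟩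

lemma qInt_add (m d : ℤ) : qInt (m + d) = RatFunc.X ^ d * qInt m + qInt d := by
  rw [qInt, qInt, qInt, ← mul_div_assoc, ← add_div, mul_sub, mul_one,
    ← zpow_add₀ RatFunc.X_ne_zero, add_comm d m]
  ring

lemma qInt_sub_qInt_natCast (n : ℤ) (i : ℕ) :
    qInt n - qInt i = RatFunc.X ^ i * (RatFunc.X ^ (n - i) - 1) / (RatFunc.X - 1) := by
  rw [qInt, qInt, div_sub_div_same, mul_sub, mul_one, ← zpow_natCast,
    ← zpow_add₀ RatFunc.X_ne_zero, add_sub_cancel]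
  ring

lemma qInt_natCast_succ (i : ℕ) :
    qInt ((i : ℤ) + 1) = (RatFunc.X ^ (i + 1) - 1) / (RatFunc.X - 1) := by
  rw [qInt, ← Nat.cast_succ, zpow_natCast]

lemma eval_gbinomPoly_qInt (n : ℤ) (k : ℕ) :
    (gbinomPoly k).eval (qInt n) = gaussBinom RatFunc.X n k := by
  have hX : ∏ i ∈ range k, (RatFunc.X : RatFunc ℚ) ^ i = RatFunc.X ^ k.choose 2 := by
    rw [prod_pow_eq_pow_sum, sum_range_id, Nat.choose_two_right]
  have hfactor : ∀ i : ℕ, (qInt n - qInt i) / (RatFunc.X ^ i * qInt ((i : ℤ) + 1)) =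
      (RatFunc.X ^ (n - i) - 1) / (RatFunc.X ^ (i + 1) - 1) := fun i => by
    have hXi := RatFunc.X_pow_succ_ne_one (K := ℚ) i
    rw [qInt_sub_qInt_natCast, qInt_natCast_succ]
    field_simp [RatFunc.X_ne_zero, RatFunc.X_sub_one_ne_zero, sub_ne_zero.2 hXi]
  simp only [gbinomPoly, eval_mul, eval_C, eval_prod, eval_sub, eval_X]
  rw [← hX, ← prod_mul_distrib, inv_mul_eq_div, ← prod_div_distrib,
    prod_congr rfl fun i _ => hfactor i, prod_div_distrib, gaussBinom, qDescProd]

/-- For `d ∈ ℤ` and `h ∈ ℕ`, there is a quantum integer-valued polynomial `f`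
with `f([m]_q) = [m+d choose h]_q` for all integers `m`. -/
theorem shifted_gaussBinomial_is_qivp (d : ℤ) (h : ℕ) :
    ∃ f : Polynomial (RatFunc ℚ),
      (∀ m : ℤ, f.eval (qInt m) = (gbinomPoly h).eval (qInt (m + d))) ∧
      (∀ n : ℤ, IsLaurentInt (f.eval (qInt n))) := by
  set f := (gbinomPoly h).comp (C (RatFunc.X ^ d) * X + C (qInt d))
  have hf : ∀ m : ℤ, f.eval (qInt m) = (gbinomPoly h).eval (qInt (m + d)) := fun m => by
    simp only [f, eval_comp, eval_add, eval_mul, eval_C, eval_X, qInt_add]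
  refine ⟨f, hf, fun n => ?_⟩
  rw [hf, eval_gbinomPoly_qInt]
  exact gaussBinom_mem RatFunc.X_ne_zero RatFunc.X_pow_succ_ne_one X_mem_laurentIntSubring
    X_inv_mem_laurentIntSubring _ _
end
end

section
/- The Z[q,q^{-1}]-module of quantum integer-valued polynomials is free with basis the polynomials gbinom(x,k) = x(x-[1]_q)(x-[2]_q)···(x-[k-1]_q)/(q^{k(k-1)/2}[k]_q!) for k ∈ Z_{≥0}. -/
open Polynomial Finset

noncomputable section

/-!
Since `gbinom(x, k)` has degree `k`, these polynomials form a `ℚ(q)`-basis of `ℚ(q)[x]`; this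
gives existence and uniqueness of the coefficients. At `x = [n]_q`, `gbinom(x, k)` takes the value
of the Gaussian binomial `[n choose k]_q`, which lies in `ℤ[q]` by the q-Pascal rule, equals `1`
for `k = n` and vanishes for `k > n`. Hence the coefficients of `f` solve a unitriangular system
over `ℤ[q, q⁻¹]` whose right-hand side is `f([0]_q), f([1]_q), …`, and are Laurent integers.
-/

local notation "q" => (RatFunc.X : RatFunc ℚ)

lemma qInt_sub (a b : ℤ) : qInt a - qInt b = q ^ b * qInt (a - b) := by
  simp only [qInt]
  rw [div_sub_div_same, mul_div_assoc', mul_sub, ← zpow_add₀ RatFunc.X_ne_zero, add_sub_cancel]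
  ring

lemma qInt_natCast_ne_zero {n : ℕ} (hn : n ≠ 0) : qInt n ≠ 0 := by
  have h : qInt n = algebraMap ℚ[X] (RatFunc ℚ) (X ^ n - C 1) /
      algebraMap ℚ[X] (RatFunc ℚ) (X - C 1) := by
    simp [qInt, RatFunc.algebraMap_X]
  rw [h]
  exact div_ne_zero (RatFunc.algebraMap_ne_zero (X_pow_sub_C_ne_zero (Nat.pos_of_ne_zero hn) 1))
    (RatFunc.algebraMap_ne_zero (X_sub_C_ne_zero 1))

def qFactorial (k : ℕ) : RatFunc ℚ := ∏ i ∈ range k, qInt ((i : ℤ) + 1)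

def qDescFactorial (n : ℤ) (k : ℕ) : RatFunc ℚ := ∏ i ∈ range k, qInt (n - i)

def qChoose (n : ℤ) (k : ℕ) : RatFunc ℚ := qDescFactorial n k / qFactorial k

lemma qFactorial_ne_zero (k : ℕ) : qFactorial k ≠ 0 :=
  prod_ne_zero_iff.mpr fun i _ => mod_cast qInt_natCast_ne_zero i.succ_ne_zero

lemma qFactorial_succ (k : ℕ) : qFactorial (k + 1) = qFactorial k * qInt ((k : ℤ) + 1) :=
  prod_range_succ _ k

lemma qDescFactorial_succ (n : ℤ) (k : ℕ) :
    qDescFactorial n (k + 1) = qDescFactorial n k * qInt (n - k) :=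
  prod_range_succ _ k

lemma qDescFactorial_succ_succ (n : ℤ) (k : ℕ) :
    qDescFactorial (n + 1) (k + 1) = qInt (n + 1) * qDescFactorial n k := by
  rw [qDescFactorial, prod_range_succ', qDescFactorial, mul_comm]
  push_cast
  simp only [add_sub_add_right_eq_sub, sub_zero]

lemma qDescFactorial_self (k : ℕ) : qDescFactorial k k = qFactorial k := by
  induction k with
  | zero => rfl
  | succ k ih => rw [Nat.cast_succ, qDescFactorial_succ_succ, ih, qFactorial_succ, mul_comm]

lemma qDescFactorial_eq_zero_of_lt {n k : ℕ} (h : n < k) : qDescFactorial n k = 0 :=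
  prod_eq_zero (mem_range.mpr h) (by simp [qInt])

lemma qChoose_zero_right (n : ℤ) : qChoose n 0 = 1 := by
  simp [qChoose, qDescFactorial, qFactorial]

lemma qChoose_self (k : ℕ) : qChoose k k = 1 := by
  rw [qChoose, qDescFactorial_self, div_self (qFactorial_ne_zero k)]

lemma qChoose_eq_zero_of_lt {n k : ℕ} (h : n < k) : qChoose n k = 0 := by
  rw [qChoose, qDescFactorial_eq_zero_of_lt h, zero_div]

lemma qChoose_succ_succ (n : ℤ) (k : ℕ) :
    qChoose (n + 1) (k + 1) = q ^ (k + 1) * qChoose n (k + 1) + qChoose n k := by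
  have hsplit : qInt (n + 1) = q ^ (k + 1) * qInt (n - k) + qInt ((k : ℤ) + 1) := by
    have h := qInt_sub (n + 1) ((k + 1 : ℕ) : ℤ)
    rw [zpow_natCast, Nat.cast_add_one, add_sub_add_right_eq_sub] at h
    linear_combination h
  have hk : qInt ((k : ℤ) + 1) ≠ 0 := mod_cast qInt_natCast_ne_zero k.succ_ne_zero
  have hfac := qFactorial_ne_zero k
  rw [qChoose, qChoose, qChoose, qDescFactorial_succ_succ, qDescFactorial_succ, qFactorial_succ,
    hsplit]
  field_simp

def laurentInt : Subring (RatFunc ℚ) where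
  carrier := {z | IsLaurentInt z}
  zero_mem' := ⟨0, 0, by simp⟩
  one_mem' := ⟨1, 0, by simp⟩
  add_mem' := by
    rintro a b ⟨p₁, k₁, h₁⟩ ⟨p₂, k₂, h₂⟩
    refine ⟨X ^ k₂ * p₁ + X ^ k₁ * p₂, k₁ + k₂, ?_⟩
    have e : q ^ (k₁ + k₂) * (a + b) = q ^ k₂ * (q ^ k₁ * a) + q ^ k₁ * (q ^ k₂ * b) := by ring
    simp [e, h₁, h₂, RatFunc.algebraMap_X]
  mul_mem' := by
    rintro a b ⟨p₁, k₁, h₁⟩ ⟨p₂, k₂, h₂⟩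
    refine ⟨p₁ * p₂, k₁ + k₂, ?_⟩
    have e : q ^ (k₁ + k₂) * (a * b) = (q ^ k₁ * a) * (q ^ k₂ * b) := by ring
    simp [e, h₁, h₂]
  neg_mem' := by
    rintro a ⟨p, k, h⟩
    exact ⟨-p, k, by simp [h]⟩

lemma X_mem_laurentInt : q ∈ laurentInt := ⟨X, 0, by simp [RatFunc.algebraMap_X]⟩

lemma qChoose_mem_laurentInt : ∀ n k : ℕ, qChoose n k ∈ laurentInt
  | _, 0 => by rw [qChoose_zero_right]; exact one_mem _
  | 0, k + 1 => by rw [qChoose_eq_zero_of_lt k.succ_pos]; exact zero_mem _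
  | n + 1, k + 1 => by
    rw [Nat.cast_succ, qChoose_succ_succ]
    exact add_mem (mul_mem (pow_mem X_mem_laurentInt _) (qChoose_mem_laurentInt n _))
      (qChoose_mem_laurentInt n k)

lemma qFactorial_mul_ne_zero (k : ℕ) : q ^ k.choose 2 * qFactorial k ≠ 0 :=
  mul_ne_zero (pow_ne_zero _ RatFunc.X_ne_zero) (qFactorial_ne_zero k)

lemma gbinomPoly_eq (k : ℕ) : gbinomPoly k =
    C (q ^ k.choose 2 * qFactorial k)⁻¹ * ∏ i ∈ range k, (X - C (qInt i)) :=
  rfl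

lemma degree_gbinomPoly (k : ℕ) : (gbinomPoly k).degree = k := by
  rw [gbinomPoly_eq, degree_C_mul (inv_ne_zero (qFactorial_mul_ne_zero k)), degree_prod]
  simp

lemma eval_qInt_gbinomPoly (n : ℤ) (k : ℕ) : (gbinomPoly k).eval (qInt n) = qChoose n k := by
  have hprod : ∏ i ∈ range k, (qInt n - qInt i) = q ^ k.choose 2 * qDescFactorial n k := by
    simp_rw [qInt_sub, zpow_natCast]
    rw [prod_mul_distrib, prod_pow_eq_pow_sum, sum_range_id, ← Nat.choose_two_right]
    rfl
  simp only [gbinomPoly_eq, eval_mul, eval_C, eval_prod, eval_sub, eval_X, hprod]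
  rw [qChoose, ← div_eq_inv_mul]
  exact mul_div_mul_left _ _ (pow_ne_zero _ RatFunc.X_ne_zero)

def gbinomSequence : Polynomial.Sequence (RatFunc ℚ) := ⟨gbinomPoly, degree_gbinomPoly⟩

def gbinomBasis : Module.Basis ℕ (RatFunc ℚ) (RatFunc ℚ)[X] :=
  gbinomSequence.basis fun k => (leadingCoeff_ne_zero.mpr (gbinomSequence.ne_zero k)).isUnit

lemma coe_gbinomBasis : ⇑gbinomBasis = gbinomPoly :=
  funext fun k => Polynomial.Sequence.basis_eq_self _ _ k

lemma finsuppSum_C_mul_gbinomPoly (c : ℕ →₀ RatFunc ℚ) :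
    c.sum (fun k a => C a * gbinomPoly k) = Finsupp.linearCombination _ gbinomBasis c := by
  simp [Finsupp.linearCombination_apply, coe_gbinomBasis, C_mul']

lemma eval_qInt_linearCombination (c : ℕ →₀ RatFunc ℚ) (n : ℕ) :
    (Finsupp.linearCombination _ gbinomPoly c).eval (qInt n) =
      ∑ k ∈ range (n + 1), c k * qChoose n k := by
  classical
  rw [Finsupp.linearCombination_apply,
    Finsupp.sum_of_support_subset c subset_union_left (fun k a => a • gbinomPoly k)
      fun _ _ => zero_smul _ _,
    eval_finsetSum]
  simp_rw [eval_smul, eval_qInt_gbinomPoly, smul_eq_mul]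
  refine (sum_subset subset_union_right fun k _ hk => ?_).symm
  rw [qChoose_eq_zero_of_lt (by simpa using hk), mul_zero]

lemma coeff_mem_laurentInt_of_eval_qInt_mem (c : ℕ →₀ RatFunc ℚ)
    (hc : ∀ n : ℕ, (Finsupp.linearCombination _ gbinomPoly c).eval (qInt n) ∈ laurentInt)
    (k : ℕ) : c k ∈ laurentInt := by
  induction k using Nat.strong_induction_on with
  | _ n ih =>
    have h := hc n
    rw [eval_qInt_linearCombination, sum_range_succ, qChoose_self, mul_one] at h
    have hlow : ∑ k ∈ range n, c k * qChoose n k ∈ laurentInt :=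
      sum_mem fun k hk => mul_mem (ih k (mem_range.mp hk)) (qChoose_mem_laurentInt n k)
    simpa only [add_sub_cancel_left] using sub_mem h hlow

/-- The `ℤ[q,q⁻¹]`-module of quantum integer-valued polynomials is free with basis
`gbinom(x, k)`, `k ∈ ℕ`: every quantum integer-valued polynomial is a unique
(finite) `ℤ[q,q⁻¹]`-linear combination of the `gbinom(x, k)`. -/
theorem qivp_free_on_gbinom (f : Polynomial (RatFunc ℚ))
    (hf : ∀ n : ℤ, IsLaurentInt (f.eval (qInt n))) :
    ∃ c : ℕ →₀ RatFunc ℚ,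
      (∀ k, IsLaurentInt (c k)) ∧
      f = c.sum (fun k a => Polynomial.C a * gbinomPoly k) ∧
      ∀ c' : ℕ →₀ RatFunc ℚ, (∀ k, IsLaurentInt (c' k)) →
        f = c'.sum (fun k a => Polynomial.C a * gbinomPoly k) → c' = c := by
  have hexp : Finsupp.linearCombination _ gbinomPoly (gbinomBasis.repr f) = f := by
    rw [← coe_gbinomBasis, gbinomBasis.linearCombination_repr]
  refine ⟨gbinomBasis.repr f, fun k => ?_, ?_, ?_⟩
  · exact coeff_mem_laurentInt_of_eval_qInt_mem _ (fun n => by rw [hexp]; exact hf n) k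
  · rw [finsuppSum_C_mul_gbinomPoly, coe_gbinomBasis, hexp]
  · rintro c' - rfl
    rw [finsuppSum_C_mul_gbinomPoly, gbinomBasis.repr_linearCombination]
end
end

section
/- Let q be a prime power, and let u, v be nonnegative integers with v ≥ 1. Let ε ∈ {1, -1}. Then the quantity [u+v-1 choose v-1]_{q²} · (q^{2u} - 1)/(q^v - ε) lies in Z[q, q^{-1}] (indeed in Z[q]). -/
open Polynomial Finset

noncomputable def NmAux (m n : ℕ) : Polynomial ℤ :=
  ∏ i ∈ Finset.range n, (Polynomial.X ^ (2 * (m + i + 1)) - 1)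

lemma NmAux_succ_last (m n : ℕ) :
    NmAux m (n + 1) = NmAux m n * (X ^ (2 * (m + n + 1)) - 1) := by
  simp [NmAux, Finset.prod_range_succ]

lemma NmAux_split_first (m n : ℕ) :
    NmAux m (n + 1) = (X ^ (2 * (m + 1)) - 1) * NmAux (m + 1) n := by
  rw [NmAux, Finset.prod_range_succ', mul_comm]
  have h1 : (X:Polynomial ℤ) ^ (2 * (m + 0 + 1)) - 1 = X ^ (2 * (m + 1)) - 1 := by norm_num
  rw [h1]
  congr 1
  exact Finset.prod_congr rfl fun i _ => by congr 2; omega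

lemma pow_merge (a b : ℕ) : (X : Polynomial ℤ) ^ (2 * (a + 1)) * X ^ (2 * (b + 1))
    = X ^ (2 * (a + b + 2)) := by
  rw [← pow_add]; congr 1; omega

lemma NmAux_pascal (m n : ℕ) :
    NmAux (m + 1) (n + 1) =
      (X ^ (2 * (n + 1)) - 1) * NmAux (m + 1) n
        + X ^ (2 * (n + 1)) * NmAux m (n + 1) := by
  rw [NmAux_succ_last, NmAux_split_first]
  have h : (X : Polynomial ℤ) ^ (2 * (m + 1 + n + 1)) - 1 =
      (X ^ (2 * (n + 1)) - 1) + X ^ (2 * (n + 1)) * (X ^ (2 * (m + 1)) - 1) := by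
    have := pow_merge n m
    have h2 : (X : Polynomial ℤ) ^ (2 * (n + m + 2)) = X ^ (2 * (m + 1 + n + 1)) := by
      congr 1; omega
    rw [h2] at this
    linear_combination this
  linear_combination (NmAux (m+1) n) * h

lemma NmAux_dvd (m : ℕ) : ∀ n, NmAux 0 n ∣ NmAux m n := by
  induction m with
  | zero => intro n; exact dvd_rfl
  | succ m ihm =>
    intro n
    induction n with
    | zero => simp [NmAux]
    | succ n ihn =>
      rw [NmAux_pascal]
      apply dvd_add
      · rw [NmAux_succ_last]
        have h0 : (X : Polynomial ℤ) ^ (2 * (0 + n + 1)) - 1 = X ^ (2 * (n + 1)) - 1 := by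
          norm_num
        rw [h0]
        rw [mul_comm (X ^ (2 * (n + 1)) - 1)]
        exact mul_dvd_mul ihn dvd_rfl
      · exact Dvd.dvd.mul_left (ihm (n + 1)) _

/-- For nonnegative integers `u, v` with `v ≥ 1` and `ε = ±1`, the quantity
`[u+v-1 choose v-1]_{q²} · (q^{2u} - 1)/(q^v - ε)` lies in `ℤ[q]` (hence in
`ℤ[q,q⁻¹]`): stated multiplicatively, `(q^v - ε)` divides the product of the
Gaussian binomial coefficient `[u+v-1 choose v-1]_{q²}` and `(q^{2u}-1)`. -/
theorem orthogonal_quotient_is_polynomial (u v : ℕ) (hv : 1 ≤ v) (ε : ℤ)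
    (hε : ε = 1 ∨ ε = -1) :
    ∃ P : Polynomial ℤ,
      (Polynomial.X ^ v - Polynomial.C ε) * P *
          ((∏ j ∈ Finset.range u, (Polynomial.X ^ (2 * (j + 1)) - 1)) *
            (∏ k ∈ Finset.range (v - 1), (Polynomial.X ^ (2 * (k + 1)) - 1))) =
        (∏ i ∈ Finset.range (u + v - 1), (Polynomial.X ^ (2 * (i + 1)) - 1)) *
          (Polynomial.X ^ (2 * u) - 1) := by
  rcases u with _ | m
  · exact ⟨0, by simp⟩
  · obtain ⟨Q, hQ⟩ := NmAux_dvd m v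
    refine ⟨(X ^ v + C ε) * Q, ?_⟩
    have hεsq : (C ε : Polynomial ℤ) * C ε = 1 := by
      rw [← C_mul]; rcases hε with h | h <;> simp [h]
    have hx2v : (X : Polynomial ℤ) ^ v * X ^ v = X ^ (2 * v) := by
      rw [← pow_add]; congr 1; omega
    have hfac : ((X : Polynomial ℤ) ^ v - C ε) * (X ^ v + C ε) = X ^ (2 * v) - 1 := by
      linear_combination hx2v - hεsq
    have hC : (∏ i ∈ range (m + 1 + v - 1), ((X : Polynomial ℤ) ^ (2 * (i + 1)) - 1)) =
        (∏ j ∈ range (m + 1), ((X : Polynomial ℤ) ^ (2 * (j + 1)) - 1)) *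
          NmAux (m + 1) (v - 1) := by
      rw [show m + 1 + v - 1 = (m + 1) + (v - 1) from by omega, Finset.prod_range_add]
      rfl
    have hN : (X ^ (2 * (m + 1)) - 1) * NmAux (m + 1) (v - 1) = NmAux m v := by
      have h := NmAux_split_first m (v - 1)
      rw [show (v - 1) + 1 = v from by omega] at h
      exact h.symm
    have hB : NmAux m v =
        (∏ k ∈ range (v - 1), ((X : Polynomial ℤ) ^ (2 * (k + 1)) - 1)) *
          (X ^ (2 * v) - 1) * Q := by
      rw [hQ]
      congr 1
      have h := NmAux_succ_last 0 (v - 1)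
      rw [show (v - 1) + 1 = v from by omega] at h
      rw [h]
      congr 1
      · unfold NmAux
        exact Finset.prod_congr rfl fun i _ => by congr 2; omega
      · congr 2; omega
    rw [hC]
    set A := ∏ j ∈ range (m + 1), ((X : Polynomial ℤ) ^ (2 * (j + 1)) - 1) with hA
    linear_combination (Q * A * (∏ k ∈ range (v - 1), ((X : Polynomial ℤ) ^ (2 * (k + 1)) - 1))) * hfac - A * hN - A * hB
end

section
/- For q a prime power and d a positive integer, each d dividing 2v but not dividing v is even with d/2 dividing v; moreover the d-th cyclotomic polynomial Φ_d(q) divides the Gaussian binomial coefficient [u+v-1 choose v-1]_{q²} in Z[q] whenever d/2 does not divide u, for such d. -/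
/-!
Since `X ^ n - 1 = ∏_{m ∣ n} Φ_m`, the product `∏_{i=1}^N (X ^ (k i) - 1)` is the product of the
`Φ_m` over a multiset of indices in which `m` occurs `⌊N / e⌋` times, `e = m / gcd(m, k)` being
the least `i` with `m ∣ k i`. As `⌊a / e⌋ + ⌊b / e⌋ ≤ ⌊(a + b) / e⌋`, the multiset for `u` plus
the one for `v - 1` is contained in the one for `u + v - 1`; for `m = d`, `k = 2`, `e = d / 2` the
inequality is strict because `e ∣ v` and `e ∤ u`, which leaves room for one more factor `Φ_d`.
-/

open Polynomial Finset

theorem Nat.dvd_mul_iff_div_gcd_dvd {m k : ℕ} (j : ℕ) (hk : 0 < k) :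
    m ∣ k * j ↔ m / m.gcd k ∣ j := by
  have hg : 0 < m.gcd k := Nat.gcd_pos_of_pos_right m hk
  conv_rhs =>
    rw [← (Nat.coprime_div_gcd_div_gcd hg).dvd_mul_left, ← Nat.mul_dvd_mul_iff_left hg, ← mul_assoc,
      Nat.mul_div_cancel' (Nat.gcd_dvd_left m k), Nat.mul_div_cancel' (Nat.gcd_dvd_right m k)]

theorem Nat.even_and_div_two_dvd_of_dvd_two_mul {d v : ℕ} (h2v : d ∣ 2 * v) (hnv : ¬ d ∣ v) :
    Even d ∧ d / 2 ∣ v := by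
  have hg : d.gcd 2 = 2 := by
    rcases (Nat.dvd_prime Nat.prime_two).mp (Nat.gcd_dvd_right d 2) with h1 | h2
    · rw [Nat.dvd_mul_iff_div_gcd_dvd v two_pos, h1, Nat.div_one] at h2v
      exact absurd h2v hnv
    · exact h2
  rw [Nat.dvd_mul_iff_div_gcd_dvd v two_pos, hg] at h2v
  exact ⟨even_iff_two_dvd.mpr (hg ▸ Nat.gcd_dvd_left d 2), h2v⟩

theorem Nat.div_add_pred_div_lt {e u v : ℕ} (hv : 0 < v) (hev : e ∣ v) (heu : ¬ e ∣ u) :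
    u / e + (v - 1) / e < (u + v - 1) / e := by
  obtain ⟨u, rfl⟩ : ∃ u', u = u' + 1 :=
    Nat.exists_eq_add_one_of_ne_zero fun hu => heu (hu ▸ dvd_zero e)
  obtain ⟨v, rfl⟩ : ∃ v', v = v' + 1 := Nat.exists_eq_add_one_of_ne_zero hv.ne'
  have hu : (u + 1) / e = u / e := by rw [Nat.succ_div, if_neg heu, add_zero]
  have hv : (v + 1) / e = v / e + 1 := by rw [Nat.succ_div, if_pos hev]
  have huv : (u + (v + 1)) / e = u / e + (v + 1) / e := Nat.add_div_of_dvd_left hev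
  rw [Nat.add_sub_cancel, show u + 1 + (v + 1) - 1 = u + (v + 1) by omega]
  omega

def cyclotomicFactorIndices (k N : ℕ) : Multiset ℕ :=
  (range N).val.bind fun i => (k * (i + 1)).divisors.val

theorem prod_X_pow_sub_one_eq_prod_cyclotomic (R : Type*) [CommRing R] {k : ℕ} (hk : 0 < k)
    (N : ℕ) :
    ∏ i ∈ range N, (X ^ (k * (i + 1)) - 1 : R[X]) =
      ((cyclotomicFactorIndices k N).map (cyclotomic · R)).prod := by
  rw [cyclotomicFactorIndices, Multiset.map_bind, Multiset.prod_bind]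
  refine prod_congr rfl fun i _ => ?_
  exact (prod_cyclotomic_eq_X_pow_sub_one (by positivity) R).symm

theorem count_cyclotomicFactorIndices {k : ℕ} (hk : 0 < k) (m N : ℕ) :
    (cyclotomicFactorIndices k N).count m = N / (m / m.gcd k) := by
  have hcount : ∀ i, (k * (i + 1)).divisors.val.count m = if m / m.gcd k ∣ i + 1 then 1 else 0 := by
    intro i
    simp [Multiset.count_eq_of_nodup (k * (i + 1)).divisors.nodup, Nat.dvd_mul_iff_div_gcd_dvd _ hk,
      hk.ne']
  rw [cyclotomicFactorIndices, Multiset.count_bind, ← Nat.card_multiples, card_filter]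
  exact congrArg Multiset.sum (Multiset.map_congr rfl fun i _ => hcount i)

theorem cons_add_cyclotomicFactorIndices_le {k d u v : ℕ} (hk : 0 < k) (hv : 0 < v)
    (hdv : d / d.gcd k ∣ v) (hdu : ¬ d / d.gcd k ∣ u) :
    d ::ₘ (cyclotomicFactorIndices k u + cyclotomicFactorIndices k (v - 1)) ≤
      cyclotomicFactorIndices k (u + v - 1) := by
  rw [Multiset.le_iff_count]
  intro m
  simp only [Multiset.count_cons, Multiset.count_add, count_cyclotomicFactorIndices hk]
  split_ifs with hm
  · subst hm
    have := Nat.div_add_pred_div_lt hv hdv hdu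
    omega
  · rw [add_zero, show u + v - 1 = u + (v - 1) by omega]
    exact Nat.div_add_div_le_add_div

theorem cyclotomic_divides_gaussBinomial_general (u v d : ℕ) (hv : 0 < v)
    (h2v : d ∣ 2 * v) (hnv : ¬ d ∣ v) :
    (Even d ∧ d / 2 ∣ v) ∧
    (¬ d / 2 ∣ u →
      ∃ P : Polynomial ℤ,
        Polynomial.cyclotomic d ℤ * P *
            ((∏ j ∈ Finset.range u, (Polynomial.X ^ (2 * (j + 1)) - 1)) *
              (∏ k ∈ Finset.range (v - 1), (Polynomial.X ^ (2 * (k + 1)) - 1))) =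
          ∏ i ∈ Finset.range (u + v - 1), (Polynomial.X ^ (2 * (i + 1)) - 1)) := by
  obtain ⟨hde, hdv⟩ := Nat.even_and_div_two_dvd_of_dvd_two_mul h2v hnv
  refine ⟨⟨hde, hdv⟩, fun hdu => ?_⟩
  have hg : d.gcd 2 = 2 := Nat.gcd_eq_right (even_iff_two_dvd.mp hde)
  obtain ⟨P, hP⟩ := Multiset.prod_dvd_prod_of_le <| Multiset.map_le_map (f := (cyclotomic · ℤ)) <|
    cons_add_cyclotomicFactorIndices_le two_pos hv (hg ▸ hdv) (hg ▸ hdu)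
  refine ⟨P, ?_⟩
  simp only [prod_X_pow_sub_one_eq_prod_cyclotomic ℤ two_pos]
  rw [hP, Multiset.map_cons, Multiset.prod_cons, Multiset.map_add, Multiset.prod_add]
  ring

/-- If `d` is a positive integer dividing `2v` but not `v`, then `d` is even with
`d/2` dividing `v`; moreover, if additionally `d/2` does not divide `u`, then the
`d`-th cyclotomic polynomial `Φ_d(q)` divides the Gaussian binomial coefficient
`[u+v-1 choose v-1]_{q²}` in `ℤ[q]` (stated multiplicatively, since the Gaussian
binomial is the quotient `∏_{i=1}^{u+v-1}(q^{2i}-1) / (∏_{j=1}^u (q^{2j}-1) ∏_{k=1}^{v-1}(q^{2k}-1))`). -/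
theorem cyclotomic_divides_gaussBinomial (u v d : ℕ) (hd : 0 < d) (hv : 0 < v)
    (h2v : d ∣ 2 * v) (hnv : ¬ d ∣ v) :
    (Even d ∧ d / 2 ∣ v) ∧
    (¬ d / 2 ∣ u →
      ∃ P : Polynomial ℤ,
        Polynomial.cyclotomic d ℤ * P *
            ((∏ j ∈ Finset.range u, (Polynomial.X ^ (2 * (j + 1)) - 1)) *
              (∏ k ∈ Finset.range (v - 1), (Polynomial.X ^ (2 * (k + 1)) - 1))) =
          ∏ i ∈ Finset.range (u + v - 1), (Polynomial.X ^ (2 * (i + 1)) - 1)) :=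
  cyclotomic_divides_gaussBinomial_general u v d hv h2v hnv
end

section
/- In the center of the integral group algebra of the symmetric group S_n (n ≥ 0), the square of the sum T of all transpositions equals 2·X_{(1,1)} + 3·X_{(2)} + C(n,2)·1, where X_{(1,1)} is the sum of all products of two disjoint transpositions, X_{(2)} is the sum of all 3-cycles, and C(n,2) = n(n-1)/2. -/
open Finset

noncomputable section

/-- The sum, in the integral group algebra of `S_n`, of all permutations with
a given cycle type. -/
def cycleTypeSum (n : ℕ) (m : Multiset ℕ) : MonoidAlgebra ℤ (Equiv.Perm (Fin n)) :=
  ∑ g : Equiv.Perm (Fin n),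
    if Equiv.Perm.cycleType g = m then MonoidAlgebra.single g (1 : ℤ) else 0

/-!
The coefficient of `x` in `T²` is the number of transpositions `t` for which `x * t⁻¹` is again
a transposition. Two transpositions are equal, disjoint, or share exactly one point, so such an
`x` is `1`, of cycle type `(2, 2)`, or a 3-cycle. For `x = 1` every transposition qualifies; for
`x` of type `(2, 2)` exactly its two cycle factors do; for a 3-cycle exactly the three
transpositions supported in its support do, since `x * t⁻¹` then moves at most three points and
is odd.
-/

namespace MonoidAlgebra

variable {k G : Type*} [Semiring k] [Group G] [Fintype G] [DecidableEq G]

theorem sum_single_one_mul_sum_single_one (A B : Finset G) :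
    (∑ a ∈ A, single a (1 : k)) * (∑ b ∈ B, single b 1) =
      ∑ x, single x (#{b ∈ B | x * b⁻¹ ∈ A} : k) := by
  have hfiber (b : G) : ∑ a ∈ A, single (a * b) (1 : k) =
      ∑ x, if x * b⁻¹ ∈ A then single x 1 else 0 := by
    rw [← Fintype.sum_equiv (Equiv.mulRight b)
      (fun a => if a ∈ A then single (a * b) (1 : k) else 0) _ (fun a => by simp),
      sum_ite_mem, univ_inter]
  calc (∑ a ∈ A, single a (1 : k)) * (∑ b ∈ B, single b 1)
      = ∑ b ∈ B, ∑ x, if x * b⁻¹ ∈ A then single x 1 else 0 := by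
        simp only [sum_mul_sum, single_mul_single, one_mul]
        rw [sum_comm]
        exact sum_congr rfl fun b _ => hfiber b
    _ = ∑ x, single x (#{b ∈ B | x * b⁻¹ ∈ A} : k) := by
        rw [sum_comm]
        simp only [card_filter, Nat.cast_sum, Nat.cast_ite, Nat.cast_one, Nat.cast_zero,
          ← singleAddHom_apply, map_sum, apply_ite (singleAddHom _), map_zero]

end MonoidAlgebra

namespace Equiv.Perm

variable {α : Type*} [DecidableEq α]

theorem IsSwap.eq_swap_apply {σ : Perm α} (hσ : σ.IsSwap) {a : α} (ha : σ a ≠ a) :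
    σ = swap a (σ a) := by
  obtain ⟨x, y, hxy, rfl⟩ := hσ
  by_cases hax : a = x
  · simp [hax]
  by_cases hay : a = y
  · simp [hay, swap_comm]
  · simp [swap_apply_of_ne_of_ne hax hay] at ha

theorem IsSwap.eq_or_disjoint_or_exists_swap_swap {s t : Perm α} (hs : s.IsSwap)
    (ht : t.IsSwap) :
    s = t ∨ Disjoint s t ∨
      ∃ a b c, a ≠ b ∧ a ≠ c ∧ b ≠ c ∧ s = swap a b ∧ t = swap a c := by
  by_cases hst : Disjoint s t
  · exact Or.inr (Or.inl hst)
  obtain ⟨a, hsa, hta⟩ : ∃ a, s a ≠ a ∧ t a ≠ a := by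
    simpa only [Disjoint, not_forall, not_or] using hst
  rw [hs.eq_swap_apply hsa, ht.eq_swap_apply hta]
  by_cases hb : s a = t a
  · exact Or.inl (by rw [hb])
  · exact Or.inr (Or.inr ⟨a, s a, t a, hsa.symm, hta.symm, hb, rfl, rfl⟩)

variable [Fintype α]

theorem IsSwap.mul_eq_one_or_cycleType_eq_or_isThreeCycle {s t : Perm α} (hs : s.IsSwap)
    (ht : t.IsSwap) :
    s * t = 1 ∨ ((s * t).cycleType = {2, 2} ∧ t ∈ (s * t).cycleFactorsFinset) ∨
      ((s * t).IsThreeCycle ∧ t.support ⊆ (s * t).support) := by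
  rcases hs.eq_or_disjoint_or_exists_swap_swap ht with
    rfl | hst | ⟨a, b, c, hab, hac, hbc, rfl, rfl⟩
  · obtain ⟨x, y, -, rfl⟩ := hs
    exact Or.inl (swap_mul_self x y)
  · refine Or.inr (Or.inl ⟨?_, ?_⟩)
    · rw [hst.cycleType_mul, isSwap_iff_cycleType.mp hs, isSwap_iff_cycleType.mp ht]
      rfl
    · rw [hst.cycleFactorsFinset_mul_eq_union, ht.isCycle.cycleFactorsFinset_eq_singleton]
      exact mem_union_right _ (mem_singleton_self t)
  · refine Or.inr (Or.inr ⟨isThreeCycle_swap_mul_swap_same hab hac hbc, ?_⟩)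
    rw [swap_comm a b, support_swap_mul_swap (by simp [hac, hbc, hab.symm]), support_swap hac]
    exact subset_insert _ _

theorem isSwap_of_card_support_le_three {σ : Perm α} (hcard : #σ.support ≤ 3)
    (hsign : sign σ = -1) : σ.IsSwap := by
  rcases (by omega : #σ.support ≤ 1 ∨ #σ.support = 2 ∨ #σ.support = 3) with h | h | h
  · rcases Nat.le_one_iff_eq_zero_or_eq_one.mp h with h | h
    · rw [card_support_eq_zero.mp h, sign_one] at hsign
      exact absurd hsign (by decide)
    · exact absurd h σ.card_support_ne_one
  · exact card_support_eq_two.mp h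
  · rw [(card_support_eq_three_iff.mp h).sign] at hsign
    exact absurd hsign (by decide)

open scoped Classical in
theorem card_filter_isSwap_support_subset (A : Finset α) :
    #{σ : Perm α | σ.IsSwap ∧ σ.support ⊆ A} = (#A).choose 2 := by
  rw [← card_powersetCard]
  refine card_bij (fun σ _ => σ.support) (fun σ hσ => ?_) (fun s hs t ht hst => ?_)
    fun P hP => ?_
  · simp only [mem_filter, mem_univ, true_and] at hσ
    exact mem_powersetCard.mpr ⟨hσ.2, card_support_eq_two.mpr hσ.1⟩
  · simp only [mem_filter, mem_univ, true_and] at hs ht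
    rcases hs.1.eq_or_disjoint_or_exists_swap_swap ht.1 with
      h | h | ⟨a, b, c, hab, hac, hbc, rfl, rfl⟩
    · exact h
    · have hempty := h.disjoint_support
      rw [hst, disjoint_self_iff_empty] at hempty
      simpa [hempty] using card_support_eq_two.mpr ht.1
    · rw [support_swap hab, support_swap hac] at hst
      have : b ∈ ({a, c} : Finset α) := hst ▸ by simp
      simp [hab.symm, hbc] at this
  · obtain ⟨x, y, hxy, rfl⟩ := card_eq_two.mp (mem_powersetCard.mp hP).2
    refine ⟨swap x y, ?_, support_swap hxy⟩
    simpa [support_swap hxy, swap_isSwap_iff, hxy] using (mem_powersetCard.mp hP).1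

open scoped Classical in
def rightSwapFactors (x : Perm α) : Finset (Perm α) :=
  {t | t.IsSwap ∧ (x * t⁻¹).IsSwap}

theorem mem_rightSwapFactors {x t : Perm α} :
    t ∈ rightSwapFactors x ↔ t.IsSwap ∧ (x * t⁻¹).IsSwap := by
  simp [rightSwapFactors]

theorem eq_one_or_cycleType_eq_or_isThreeCycle_of_mem_rightSwapFactors {x t : Perm α}
    (ht : t ∈ rightSwapFactors x) :
    x = 1 ∨ (x.cycleType = {2, 2} ∧ t ∈ x.cycleFactorsFinset) ∨
      (x.IsThreeCycle ∧ t.support ⊆ x.support) := by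
  obtain ⟨ht, hs⟩ := mem_rightSwapFactors.mp ht
  simpa only [inv_mul_cancel_right] using hs.mul_eq_one_or_cycleType_eq_or_isThreeCycle ht

theorem card_rightSwapFactors_one :
    #(rightSwapFactors (1 : Perm α)) = (Fintype.card α).choose 2 := by
  rw [← card_univ, ← card_filter_isSwap_support_subset]
  congr 1
  ext t
  simp only [mem_rightSwapFactors, one_mul, mem_filter, mem_univ, true_and, subset_univ,
    and_true, and_iff_left_iff_imp]
  rintro ⟨a, b, hab, rfl⟩
  exact ⟨a, b, hab, swap_inv a b⟩

theorem card_rightSwapFactors_of_cycleType_eq {x : Perm α} (hx : x.cycleType = {2, 2}) :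
    #(rightSwapFactors x) = 2 := by
  have hfactors : rightSwapFactors x = x.cycleFactorsFinset := by
    ext t
    constructor
    · intro ht
      rcases eq_one_or_cycleType_eq_or_isThreeCycle_of_mem_rightSwapFactors ht with
        rfl | ⟨-, ht⟩ | ⟨h3, -⟩
      · simp at hx
      · exact ht
      · simp [h3.cycleType] at hx
    · intro ht
      have htype : t.cycleType = {2} := by
        have hcycle := (mem_cycleFactorsFinset_iff.mp ht).1
        have hle := cycleType_le_of_mem_cycleFactorsFinset ht
        rw [hcycle.cycleType, hx, Multiset.singleton_le] at hle
        rw [hcycle.cycleType]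
        simpa using hle
      rw [mem_rightSwapFactors, isSwap_iff_cycleType, isSwap_iff_cycleType,
        cycleType_mul_inv_mem_cycleFactorsFinset_eq_sub ht, hx, htype]
      exact ⟨rfl, rfl⟩
  have := congrArg Multiset.card hx
  rwa [cycleType_def, Multiset.card_map, ← hfactors] at this

theorem card_rightSwapFactors_of_isThreeCycle {x : Perm α} (hx : x.IsThreeCycle) :
    #(rightSwapFactors x) = 3 := by
  classical
  have hfactors :
      rightSwapFactors x = ({t | t.IsSwap ∧ t.support ⊆ x.support} : Finset (Perm α)) := by
    ext t
    simp only [mem_filter, mem_univ, true_and]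
    constructor
    · intro ht
      rcases eq_one_or_cycleType_eq_or_isThreeCycle_of_mem_rightSwapFactors ht with
        rfl | ⟨h22, -⟩ | ⟨-, hsub⟩
      · exact absurd rfl hx.ne_one
      · simp [hx.cycleType] at h22
      · exact ⟨(mem_rightSwapFactors.mp ht).1, hsub⟩
    · rintro ⟨ht, hsub⟩
      refine mem_rightSwapFactors.mpr ⟨ht, isSwap_of_card_support_le_three ?_ ?_⟩
      · calc #(x * t⁻¹).support ≤ #x.support := by
              refine card_le_card ((support_mul_le x t⁻¹).trans ?_)
              rw [support_inv]
              exact union_subset le_rfl hsub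
          _ = 3 := hx.card_support
      · simp [hx.sign, ht.sign_eq]
  rw [hfactors, card_filter_isSwap_support_subset, hx.card_support]
  rfl

theorem rightSwapFactors_eq_empty {x : Perm α} (h1 : x ≠ 1) (h22 : x.cycleType ≠ {2, 2})
    (h3 : ¬x.IsThreeCycle) : rightSwapFactors x = ∅ :=
  eq_empty_of_forall_notMem fun _ ht => by
    rcases eq_one_or_cycleType_eq_or_isThreeCycle_of_mem_rightSwapFactors ht with
      h | ⟨h, -⟩ | ⟨h, -⟩
    exacts [h1 h, h22 h, h3 h]

theorem card_rightSwapFactors (x : Perm α) :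
    (#(rightSwapFactors x) : ℤ) =
      (if x.cycleType = {2, 2} then 2 else 0) + (if x.cycleType = {3} then 3 else 0) +
        (if x = 1 then ((Fintype.card α).choose 2 : ℤ) else 0) := by
  rcases eq_or_ne x 1 with rfl | h1
  · simp [card_rightSwapFactors_one]
  by_cases h22 : x.cycleType = {2, 2}
  · rw [card_rightSwapFactors_of_cycleType_eq h22, if_pos h22, if_neg (by rw [h22]; decide),
      if_neg h1]
    rfl
  by_cases h3 : x.IsThreeCycle
  · rw [card_rightSwapFactors_of_isThreeCycle h3, if_neg h22, if_pos h3.cycleType, if_neg h1]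
    rfl
  · rw [rightSwapFactors_eq_empty h1 h22 h3, if_neg h22, if_neg (show x.cycleType ≠ {3} from h3),
      if_neg h1]
    rfl

end Equiv.Perm

/-- In `Z[S_n]`, the square of the sum `T` of all transpositions equals
`2·X_{(1,1)} + 3·X_{(2)} + C(n,2)·1`, where `X_{(1,1)}` is the sum of all
products of two disjoint transpositions (cycle type `{2,2}`), `X_{(2)}` is the
sum of all 3-cycles (cycle type `{3}`), and `C(n,2) = n(n-1)/2`. -/
theorem transpositions_squared (n : ℕ) :
    cycleTypeSum n {2} * cycleTypeSum n {2} =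
      2 * cycleTypeSum n {2, 2} + 3 * cycleTypeSum n {3} +
        (n.choose 2 : ℤ) • (1 : MonoidAlgebra ℤ (Equiv.Perm (Fin n))) := by
  classical
  have hT : cycleTypeSum n {2} = ∑ g ∈ {g | g.IsSwap}, MonoidAlgebra.single g 1 := by
    simp only [cycleTypeSum, ← sum_filter, Equiv.Perm.isSwap_iff_cycleType]
  have hRHS : 2 * cycleTypeSum n {2, 2} + 3 * cycleTypeSum n {3} +
      (n.choose 2 : ℤ) • (1 : MonoidAlgebra ℤ (Equiv.Perm (Fin n))) =
      ∑ x, MonoidAlgebra.single x ((if x.cycleType = {2, 2} then 2 else 0) +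
        (if x.cycleType = {3} then 3 else 0) + (if x = 1 then (n.choose 2 : ℤ) else 0)) := by
    simp [cycleTypeSum, mul_sum, MonoidAlgebra.ofNat_def, MonoidAlgebra.single_mul_single,
      MonoidAlgebra.single_add, sum_add_distrib, apply_ite (MonoidAlgebra.single _),
      MonoidAlgebra.one_def]
  rw [hT, MonoidAlgebra.sum_single_one_mul_sum_single_one, hRHS]
  refine sum_congr rfl fun x _ => congrArg (MonoidAlgebra.single x) ?_
  have hcount := x.card_rightSwapFactors
  rw [Fintype.card_fin] at hcount
  rw [← hcount]
  congr 2
  ext t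
  simp [Equiv.Perm.mem_rightSwapFactors]
end
end
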